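/- arXiv:math/0212038 — 9 statements merged into one kernel-verified Lean document; each statement's English description precedes it below -/
import Mathlib

section
/- Let C be a linear [n,k,d] code over a finite field F, let t be a non-negative integer with 2d ≥ n+2-t, and suppose the future subcode F_{d-1} is nonzero. Then dim F_{d-1} ≤ t, and hence the (d-1)-th state dimension s_{d-1} = k - dim P_{d-1} - dim F_{d-1} satisfies s_{d-1} ≥ k - t. -/
open Module Finset

/-- Words of `F^n` vanishing at all coordinates `j` with `i ≤ j`. -/
def zeroFrom (F : Type*) [Field F] (n i : ℕ) : Submodule F (Fin n → F) where
  carrier := {x | ∀ j : Fin n, i ≤ (j : ℕ) → x j = 0}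
  add_mem' := by intro a b ha hb j hj; simp [ha j hj, hb j hj]
  zero_mem' := by intro j _; rfl
  smul_mem' := by intro c a ha j hj; simp [ha j hj]

/-- Words of `F^n` vanishing at all coordinates `j` with `j < i`. -/
def zeroUpTo (F : Type*) [Field F] (n i : ℕ) : Submodule F (Fin n → F) where
  carrier := {x | ∀ j : Fin n, (j : ℕ) < i → x j = 0}
  add_mem' := by intro a b ha hb j hj; simp [ha j hj, hb j hj]
  zero_mem' := by intro j _; rfl
  smul_mem' := by intro c a ha j hj; simp [ha j hj]


lemma aux_card {n b m : ℕ} (p : Fin n → Prop) [DecidablePred p]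
    (h : ∀ j, p j → b ≤ (j : ℕ) ∧ (j : ℕ) < b + m) : #{j | p j} ≤ m := by
  have := Finset.card_le_card_of_injOn (f := fun j : Fin n => (j : ℕ) - b)
    (s := ({j | p j} : Finset (Fin n))) (t := Finset.range m)
    (by intro j hj
        simp only [Finset.mem_coe, Finset.mem_filter, Finset.mem_univ, true_and] at hj
        have := h j hj; simp only [Finset.mem_coe, Finset.mem_range]; omega)
    (by intro x hx y hy hxy
        simp only [Finset.coe_filter, Set.mem_setOf_eq, Finset.mem_univ, true_and] at hx hy
        have hx' := h x hx; have hy' := h y hy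
        have hxy' : (x : ℕ) - b = (y : ℕ) - b := hxy
        exact Fin.ext (by omega))
  simpa using this

lemma norm_le_of_supp {F : Type*} [Field F] [DecidableEq F] {n b m : ℕ} (x : Fin n → F)
    (h : ∀ j : Fin n, x j ≠ 0 → b ≤ (j : ℕ) ∧ (j : ℕ) < b + m) : hammingNorm x ≤ m :=
  aux_card _ h

/-- if `C` is an `[n,k,d]` code, `t ≥ 0` with `2d ≥ n+2-t`, and the
future subcode `F_{d-1}` is nonzero, then `dim F_{d-1} ≤ t`, hence
`s_{d-1} = k - dim P_{d-1} - dim F_{d-1} ≥ k - t`. -/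
theorem stmt1 {F : Type*} [Field F] [Fintype F] [DecidableEq F] {n : ℕ}
    (C : Submodule F (Fin n → F)) (d k t : ℕ)
    (hk : k = finrank F C)
    (hd_le : ∀ c ∈ C, c ≠ 0 → d ≤ hammingNorm c)
    (hd_ex : ∃ c ∈ C, c ≠ 0 ∧ hammingNorm c = d)
    (h2d : n + 2 ≤ 2 * d + t)
    (hF : C ⊓ zeroUpTo F n (d - 1) ≠ ⊥) :
    finrank F ↥(C ⊓ zeroUpTo F n (d - 1)) ≤ t ∧
    k - t ≤ k - finrank F ↥(C ⊓ zeroFrom F n (d - 1))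
              - finrank F ↥(C ⊓ zeroUpTo F n (d - 1)) := by
  obtain ⟨c, hcC, hc0, hcd⟩ := hd_ex
  have hd1 : 1 ≤ d := by
    have : hammingNorm c ≠ 0 := by simpa [hammingNorm_eq_zero] using hc0
    omega
  -- any codeword of norm ≤ d-1 is zero
  have hsmall : ∀ x ∈ C, hammingNorm x ≤ d - 1 → x = 0 := by
    intro x hx hnx
    by_contra hx0
    have := hd_le x hx hx0
    omega
  set a := d - 1 with ha
  set s := n + 2 - 2 * d with hs
  -- P_{d-1} is trivial
  have hP : C ⊓ zeroFrom F n a = ⊥ := by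
    apply (Submodule.eq_bot_iff _).2
    rintro x ⟨hxC, hxZ⟩
    refine hsmall x hxC (norm_le_of_supp (b := 0) x ?_)
    intro j hj
    have : (j : ℕ) < a := by
      by_contra hja
      exact hj (hxZ j (by omega))
    omega
  have hPrank : finrank F ↥(C ⊓ zeroFrom F n a) = 0 := by
    rw [hP]; exact finrank_bot F _
  -- Singleton bound for F_{d-1}
  have hFrank : finrank F ↥(C ⊓ zeroUpTo F n a) ≤ s := by
    set p : Fin n → Prop := fun j => a ≤ (j : ℕ) ∧ (j : ℕ) < a + s with hp
    have : DecidablePred p := fun j => instDecidableAnd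
    let φ : ↥(C ⊓ zeroUpTo F n a) →ₗ[F] ({j : Fin n // p j} → F) :=
      { toFun := fun x j => x.val j.val
        map_add' := fun x y => rfl
        map_smul' := fun c x => rfl }
    have hinj : Function.Injective φ := by
      rw [← LinearMap.ker_eq_bot, LinearMap.ker_eq_bot']
      intro x hx
      obtain ⟨hxC, hxZ⟩ := x.2
      have hval : x.val = 0 := by
        refine hsmall x.val hxC (norm_le_of_supp (b := a + s) (m := d - 1) x.val ?_)
        intro j hj
        have h1 : ¬ (j : ℕ) < a := fun h => hj (hxZ j h)
        have h2 : ¬ p j := by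
          intro hpj
          exact hj (congrFun hx ⟨j, hpj⟩)
        have h3 : (j : ℕ) < n := j.isLt
        simp only [hp, not_and, not_lt] at h2
        constructor
        · exact h2 (by omega)
        · omega
      exact Subtype.ext hval
    have := LinearMap.finrank_le_finrank_of_injective hinj
    have hcard : Fintype.card {j : Fin n // p j} ≤ s := by
      rw [Fintype.card_subtype]
      exact aux_card p (fun j hj => hj)
    calc finrank F ↥(C ⊓ zeroUpTo F n a) ≤ finrank F ({j : Fin n // p j} → F) := this
      _ = Fintype.card {j : Fin n // p j} := by
          rw [Module.finrank_fintype_fun_eq_card]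
      _ ≤ s := hcard
  have hst : s ≤ t := by omega
  exact ⟨le_trans hFrank hst, by omega⟩
end

section
/- Let C be a linear [n,k,d] code over a finite field F, and let i be an integer with 1 ≤ i ≤ k such that the i-th generalized Hamming weight satisfies d_i(C) ≥ n+2-d. Then dim F_{d-1} < i, and hence s_{d-1} = k - dim P_{d-1} - dim F_{d-1} ≥ k - i + 1. -/
open Module

/-- The support of a subcode `V ⊆ F^n`: the set of coordinate positions at which
some codeword of `V` is nonzero. -/
def codeSupp {F : Type*} [Field F] {n : ℕ} (V : Submodule F (Fin n → F)) : Set (Fin n) :=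
  {j : Fin n | ∃ x ∈ V, x j ≠ 0}

/-- if the `i`-th generalized Hamming weight of `C` (minimum support
cardinality of a subcode of dimension at least `i`) satisfies `d_i(C) ≥ n+2-d`,
then `dim F_{d-1} < i`, hence `s_{d-1} = k - dim P_{d-1} - dim F_{d-1} ≥ k-i+1`. -/
theorem stmt2 {F : Type*} [Field F] [Fintype F] [DecidableEq F] {n : ℕ}
    (C : Submodule F (Fin n → F)) (d k i di : ℕ)
    (hk : k = finrank F C)
    (hd_le : ∀ c ∈ C, c ≠ 0 → d ≤ hammingNorm c)
    (hd_ex : ∃ c ∈ C, c ≠ 0 ∧ hammingNorm c = d)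
    (hi1 : 1 ≤ i) (hik : i ≤ k)
    (hdi_min : ∀ V : Submodule F (Fin n → F), V ≤ C → i ≤ finrank F V →
      di ≤ (codeSupp V).ncard)
    (hdi_ex : ∃ V : Submodule F (Fin n → F), V ≤ C ∧ i ≤ finrank F V ∧
      (codeSupp V).ncard = di)
    (hbound : n + 2 ≤ di + d) :
    finrank F ↥(C ⊓ zeroUpTo F n (d - 1)) < i ∧
    k - i + 1 ≤ k - finrank F ↥(C ⊓ zeroFrom F n (d - 1))
              - finrank F ↥(C ⊓ zeroUpTo F n (d - 1)) := by
  obtain ⟨c, hcC, hc0, hcd⟩ := hd_ex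
  have hd1 : 1 ≤ d := by
    have := hammingNorm_pos_iff.mpr hc0
    omega
  have hdn : d ≤ n := by
    have := hammingNorm_le_card_fintype (x := c)
    simpa [hcd] using this
  -- the finset of coordinates < d - 1
  let A : Finset (Fin n) := Finset.univ.filter (fun j : Fin n => (j : ℕ) < d - 1)
  have hAcard : d - 1 ≤ A.card := by
    rw [← Finset.card_range (d - 1)]
    apply Finset.card_le_card_of_injOn
      (f := fun m : ℕ => (⟨m % n, Nat.mod_lt _ (by omega)⟩ : Fin n))
    · intro m hm
      simp only [Finset.mem_coe, Finset.mem_range] at hm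
      have hmn : m < n := by omega
      refine Finset.mem_filter.mpr ⟨Finset.mem_univ _, ?_⟩
      show m % n < d - 1
      rw [Nat.mod_eq_of_lt hmn]
      exact hm
    · intro a ha b hb hab
      simp only [Finset.coe_range, Set.mem_Iio] at ha hb
      have : a % n = b % n := congrArg Fin.val hab
      rwa [Nat.mod_eq_of_lt (by omega), Nat.mod_eq_of_lt (by omega)] at this
  -- first claim
  have hF : finrank F ↥(C ⊓ zeroUpTo F n (d - 1)) < i := by
    by_contra h
    push_neg at h
    have hdi := hdi_min _ inf_le_left h
    have hfin : (codeSupp (C ⊓ zeroUpTo F n (d - 1))).Finite := Set.toFinite _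
    have hScard : (codeSupp (C ⊓ zeroUpTo F n (d - 1))).ncard = hfin.toFinset.card :=
      Set.ncard_eq_toFinset_card _ hfin
    have hdisj : Disjoint hfin.toFinset A := by
      rw [Finset.disjoint_left]
      intro j hj hjA
      rw [Set.Finite.mem_toFinset] at hj
      obtain ⟨x, hxV, hxj⟩ := hj
      simp only [A, Finset.mem_filter] at hjA
      exact hxj (hxV.2 j hjA.2)
    have hunion : hfin.toFinset.card + A.card ≤ n := by
      have := Finset.card_le_univ (hfin.toFinset ∪ A)
      rw [Finset.card_union_of_disjoint hdisj] at this
      simpa using this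
    omega
  refine ⟨hF, ?_⟩
  have hP : C ⊓ zeroFrom F n (d - 1) = ⊥ := by
    rw [eq_bot_iff]
    rintro x ⟨hxC, hxZ⟩
    simp only [Submodule.mem_bot]
    by_contra hx0
    have hxd := hd_le x hxC hx0
    have hle : hammingNorm x ≤ d - 1 := by
      rw [← Finset.card_range (d - 1), hammingNorm]
      apply Finset.card_le_card_of_injOn (f := fun j : Fin n => (j : ℕ))
      · intro j hj
        simp only [Finset.mem_coe, Finset.mem_filter, Finset.mem_univ, true_and] at hj
        simp only [Finset.mem_coe, Finset.mem_range]
        by_contra hc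
        exact hj (hxZ j (by omega))
      · intro a _ b _ hab
        exact Fin.val_injective hab
    omega
  rw [hP]
  simp only [finrank_bot, Nat.sub_zero]
  omega
end

section
/- Let C = C_X(D,G) be an algebraic geometric code of length n and abundance a = ℓ(G-D) on a curve X over F with gonality sequence (γ_i). Then the i-th generalized Hamming weight of C satisfies d_i ≥ n - deg(G) + γ_{a+i}. -/
/-- The gonality sequence of a curve, described by its divisor theory:
`gon deg ell j` is the minimal degree of a divisor `A` with `ℓ(A) ≥ j`. -/
noncomputable def gon {Div : Type*} (deg : Div → ℤ) (ell : Div → ℕ) (j : ℕ) : ℤ :=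
  sInf {m : ℤ | ∃ A : Div, deg A = m ∧ j ≤ ell A}

/-- for an AG code `C_X(D,G)` of length `n` and abundance
`a = ℓ(G-D)`, the `i`-th generalized Hamming weight (characterized by
`d_i = min{n - deg D' : 0 ≤ D' ≤ D, ℓ(G-D') ≥ a+i}`, here witnessed by an
attaining subdivisor `D' = ∑_{j ∈ S} P_j`) satisfies `d_i ≥ n - deg G + γ_{a+i}`. -/
theorem stmt8
    {Div : Type*} [AddCommGroup Div]
    (deg : Div →+ ℤ) (ell : Div → ℕ) (g : ℕ) (K : Div)
    (Pt : Type*) [Nonempty Pt] (pt : Pt → Div)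
    (hdeg_pt : ∀ P, deg (pt P) = 1)
    (hell_neg : ∀ A, deg A < 0 → ell A = 0)
    (hell_zero : ell (0 : Div) = 1)
    (hell_deg_zero : ∀ A, deg A = 0 → ell A ≤ 1)
    (hell_sub : ∀ A P, ell A ≤ ell (A - pt P) + 1)
    (hell_mono : ∀ A P, ell A ≤ ell (A + pt P))
    (hK : deg K = 2 * (g : ℤ) - 2)
    (hRR : ∀ A, (ell A : ℤ) - (ell (K - A) : ℤ) = deg A + 1 - (g : ℤ))
    (hCliff : ∀ A, 0 < ell A → 0 < ell (K - A) → 2 * ((ell A : ℤ) - 1) ≤ deg A)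
    (hell_add : ∀ A B, 0 < ell A → 0 < ell B → ell A + ell B ≤ ell (A + B) + 1)
    (n : ℕ) (P : Fin n → Pt) (hP : Function.Injective P) (G : Div)
    (i di : ℕ) (hi : 1 ≤ i)
    (hdi : ∃ S : Finset (Fin n), (di : ℤ) = (n : ℤ) - S.card ∧
      ell (G - ∑ j, pt (P j)) + i ≤ ell (G - ∑ j ∈ S, pt (P j)))
    :
    (n : ℤ) - deg G + gon (⇑deg) ell (ell (G - ∑ j, pt (P j)) + i) ≤ (di : ℤ) := by
  obtain ⟨S, hcard, hS⟩ := hdi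
  set j := ell (G - ∑ j, pt (P j)) + i with hj
  have hbdd : BddBelow {m : ℤ | ∃ A : Div, deg A = m ∧ j ≤ ell A} := by
    refine ⟨0, fun m hm => ?_⟩
    obtain ⟨A, hA, hje⟩ := hm
    by_contra h
    have : deg A < 0 := by omega
    have := hell_neg A this
    omega
  have hdegS : deg (G - ∑ k ∈ S, pt (P k)) = deg G - S.card := by
    simp [map_sub, map_sum, hdeg_pt]
  have hmem : (deg G - S.card : ℤ) ∈ {m : ℤ | ∃ A : Div, deg A = m ∧ j ≤ ell A} :=
    ⟨G - ∑ k ∈ S, pt (P k), hdegS, hS⟩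
  have : gon (⇑deg) ell j ≤ deg G - S.card := csInf_le hbdd hmem
  omega
end

section
/- Improved Goppa bound: for any algebraic geometric code C = C_X(D,G) of length n, minimum distance d, and abundance a = ℓ(G-D), one has d ≥ n - deg(G) + γ_{a+1}, where (γ_i) is the gonality sequence of X over F. -/
/-- improved Goppa bound: for an AG code `C_X(D,G)` of length `n`,
minimum distance `d` (witnessed as `d = n - deg D'` with `0 ≤ D' ≤ D` and
`ℓ(G - D') ≥ a + 1`), and abundance `a = ℓ(G-D)`, one has
`d ≥ n - deg G + γ_{a+1}`. -/
theorem stmt9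
    {Div : Type*} [AddCommGroup Div]
    (deg : Div →+ ℤ) (ell : Div → ℕ) (g : ℕ) (K : Div)
    (Pt : Type*) [Nonempty Pt] (pt : Pt → Div)
    (hdeg_pt : ∀ P, deg (pt P) = 1)
    (hell_neg : ∀ A, deg A < 0 → ell A = 0)
    (hell_zero : ell (0 : Div) = 1)
    (hell_deg_zero : ∀ A, deg A = 0 → ell A ≤ 1)
    (hell_sub : ∀ A P, ell A ≤ ell (A - pt P) + 1)
    (hell_mono : ∀ A P, ell A ≤ ell (A + pt P))
    (hK : deg K = 2 * (g : ℤ) - 2)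
    (hRR : ∀ A, (ell A : ℤ) - (ell (K - A) : ℤ) = deg A + 1 - (g : ℤ))
    (hCliff : ∀ A, 0 < ell A → 0 < ell (K - A) → 2 * ((ell A : ℤ) - 1) ≤ deg A)
    (hell_add : ∀ A B, 0 < ell A → 0 < ell B → ell A + ell B ≤ ell (A + B) + 1)
    (n : ℕ) (P : Fin n → Pt) (hP : Function.Injective P) (G : Div)
    (d : ℕ)
    (hd : ∃ S : Finset (Fin n), (d : ℤ) = (n : ℤ) - S.card ∧
      ell (G - ∑ j, pt (P j)) + 1 ≤ ell (G - ∑ j ∈ S, pt (P j)))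
    :
    (n : ℤ) - deg G + gon (⇑deg) ell (ell (G - ∑ j, pt (P j)) + 1) ≤ (d : ℤ) := by
  obtain ⟨S, hdS, hellS⟩ := hd
  set a := ell (G - ∑ j, pt (P j)) with ha
  have hmem : deg (G - ∑ j ∈ S, pt (P j)) ∈
      {m : ℤ | ∃ A : Div, deg A = m ∧ a + 1 ≤ ell A} := ⟨_, rfl, hellS⟩
  have hbdd : BddBelow {m : ℤ | ∃ A : Div, deg A = m ∧ a + 1 ≤ ell A} := by
    refine ⟨0, fun m hm => ?_⟩
    obtain ⟨A, rfl, hA⟩ := hm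
    by_contra h
    push_neg at h
    have := hell_neg A h
    omega
  have h1 : gon (⇑deg) ell (a + 1) ≤ deg (G - ∑ j ∈ S, pt (P j)) := csInf_le hbdd hmem
  have h2 : deg (G - ∑ j ∈ S, pt (P j)) = deg G - S.card := by
    rw [map_sub, map_sum]
    simp [hdeg_pt]
  omega
end

section
/- For any algebraic geometric code C = C_X(D,G) on a curve X of genus g, with dimension k, minimum distance d, and abundance a = ℓ(G-D), assuming G - D is a special divisor, one has d ≥ (n - k + 1) - (g - a). -/
/-- Goppa-like Singleton defect bound: for an AG code `C_X(D,G)`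
on a curve of genus `g`, of dimension `k = ℓ(G) - a`, abundance `a = ℓ(G-D)`,
with `G - D` special, the minimum distance satisfies `d ≥ (n-k+1) - (g-a)`. -/
theorem stmt10
    {Div : Type*} [AddCommGroup Div]
    (deg : Div →+ ℤ) (ell : Div → ℕ) (g : ℕ) (K : Div)
    (Pt : Type*) [Nonempty Pt] (pt : Pt → Div)
    (hdeg_pt : ∀ P, deg (pt P) = 1)
    (hell_neg : ∀ A, deg A < 0 → ell A = 0)
    (hell_zero : ell (0 : Div) = 1)
    (hell_deg_zero : ∀ A, deg A = 0 → ell A ≤ 1)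
    (hell_sub : ∀ A P, ell A ≤ ell (A - pt P) + 1)
    (hell_mono : ∀ A P, ell A ≤ ell (A + pt P))
    (hK : deg K = 2 * (g : ℤ) - 2)
    (hRR : ∀ A, (ell A : ℤ) - (ell (K - A) : ℤ) = deg A + 1 - (g : ℤ))
    (hCliff : ∀ A, 0 < ell A → 0 < ell (K - A) → 2 * ((ell A : ℤ) - 1) ≤ deg A)
    (hell_add : ∀ A B, 0 < ell A → 0 < ell B → ell A + ell B ≤ ell (A + B) + 1)
    (n : ℕ) (P : Fin n → Pt) (hP : Function.Injective P) (G : Div)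
    (d k : ℕ)
    (hk : (k : ℤ) = (ell G : ℤ) - ell (G - ∑ j, pt (P j)))
    (hspecial : 0 < ell (K - (G - ∑ j, pt (P j))))
    (hd : ∃ S : Finset (Fin n), (d : ℤ) = (n : ℤ) - S.card ∧
      ell (G - ∑ j, pt (P j)) + 1 ≤ ell (G - ∑ j ∈ S, pt (P j)))
    :
    ((n : ℤ) - k + 1) - ((g : ℤ) - ell (G - ∑ j, pt (P j))) ≤ (d : ℤ) := by
  set D := ∑ j, pt (P j) with hD
  obtain ⟨S, hdS, hSell⟩ := hd
  set a : ℤ := (ell (G - D) : ℤ) with ha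
  set A := G - ∑ j ∈ S, pt (P j) with hA
  have hdegDS : deg (∑ j ∈ S, pt (P j)) = (S.card : ℤ) := by
    rw [map_sum]; simp [hdeg_pt]
  have hdegA : deg A = deg G - (S.card : ℤ) := by
    rw [hA, map_sub, hdegDS]
  -- a ≤ g
  have hag : a ≤ (g : ℤ) := by
    by_cases h0 : 0 < ell (G - D)
    · have hcl := hCliff (G - D) h0 hspecial
      have hdegKGD : 0 ≤ deg (K - (G - D)) := by
        by_contra h
        push_neg at h
        have := hell_neg _ h
        omega
      have hsub : deg (K - (G - D)) = deg K - deg (G - D) := by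
        rw [map_sub]
      rw [hsub, hK] at hdegKGD
      linarith
    · have : ell (G - D) = 0 := by omega
      rw [ha, this]
      exact_mod_cast Nat.zero_le g
  -- k ≥ deg G + 1 - g - a
  have hRRG := hRR G
  have hellG : (deg G : ℤ) + 1 - (g : ℤ) ≤ (ell G : ℤ) := by
    have : (0 : ℤ) ≤ (ell (K - G) : ℤ) := by exact_mod_cast Nat.zero_le _
    linarith
  -- deg A ≥ 2a
  have hApos : 0 < ell A := by omega
  have hdegA2a : 2 * a ≤ deg A := by
    by_cases hKA : 0 < ell (K - A)
    · have hcl := hCliff A hApos hKA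
      have : a + 1 ≤ (ell A : ℤ) := by rw [ha]; exact_mod_cast hSell
      linarith
    · have hKA0 : ell (K - A) = 0 := by omega
      have hRRA := hRR A
      rw [hKA0] at hRRA
      have : a + 1 ≤ (ell A : ℤ) := by rw [ha]; exact_mod_cast hSell
      push_cast at hRRA
      linarith
  linarith [hdS, hk, hdegA, hdegA2a, hag, hellG]
end

section
/- Let C = C_X(D,G) be an AG code of abundance a on a curve X of genus g with gonality sequence (γ_i), dimension k, and state dimensions s_i := ℓ(G) + a - ℓ(A_i) - ℓ(B_i), where A_i = G - P_1 - ... - P_i and B_i = G - P_{i+1} - ... - P_n. If i ∈ {0,...,n} and j ∈ ℕ satisfy deg(G) - γ_j < min(i, n-i), then s_i ≥ k - 2(j-1-a). -/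
/-- `pastDiv pt P G i = A_i = G - P_1 - ... - P_i`. -/
def pastDiv {Div : Type*} [AddCommGroup Div] {Pt : Type*} {n : ℕ}
    (pt : Pt → Div) (P : Fin n → Pt) (G : Div) (i : ℕ) : Div :=
  G - ∑ j ∈ Finset.univ.filter (fun j : Fin n => (j : ℕ) < i), pt (P j)

/-- `futureDiv pt P G i = B_i = G - P_{i+1} - ... - P_n`. -/
def futureDiv {Div : Type*} [AddCommGroup Div] {Pt : Type*} {n : ℕ}
    (pt : Pt → Div) (P : Fin n → Pt) (G : Div) (i : ℕ) : Div :=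
  G - ∑ j ∈ Finset.univ.filter (fun j : Fin n => i ≤ (j : ℕ)), pt (P j)

/-- for an AG code `C_X(D,G)` with state dimensions
`s_i = ℓ(G) + a - ℓ(A_i) - ℓ(B_i)`, if `deg G - γ_j < min(i, n-i)` then
`s_i ≥ k - 2(j - 1 - a)` where `k = ℓ(G) - a` and `a = ℓ(G - D)`. -/
theorem stmt12
    {Div : Type*} [AddCommGroup Div]
    (deg : Div →+ ℤ) (ell : Div → ℕ) (g : ℕ) (K : Div)
    (Pt : Type*) [Nonempty Pt] (pt : Pt → Div)
    (hdeg_pt : ∀ P, deg (pt P) = 1)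
    (hell_neg : ∀ A, deg A < 0 → ell A = 0)
    (hell_zero : ell (0 : Div) = 1)
    (hell_deg_zero : ∀ A, deg A = 0 → ell A ≤ 1)
    (hell_sub : ∀ A P, ell A ≤ ell (A - pt P) + 1)
    (hell_mono : ∀ A P, ell A ≤ ell (A + pt P))
    (hK : deg K = 2 * (g : ℤ) - 2)
    (hRR : ∀ A, (ell A : ℤ) - (ell (K - A) : ℤ) = deg A + 1 - (g : ℤ))
    (hCliff : ∀ A, 0 < ell A → 0 < ell (K - A) → 2 * ((ell A : ℤ) - 1) ≤ deg A)
    (hell_add : ∀ A B, 0 < ell A → 0 < ell B → ell A + ell B ≤ ell (A + B) + 1)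
    (n : ℕ) (P : Fin n → Pt) (hP : Function.Injective P) (G : Div)
    (i j : ℕ) (hi : i ≤ n) (hj : 1 ≤ j)
    (hgon : deg G - gon (⇑deg) ell j < min (i : ℤ) ((n : ℤ) - i))
    :
    ((ell G : ℤ) - ell (G - ∑ j, pt (P j)))
        - 2 * ((j : ℤ) - 1 - ell (G - ∑ j, pt (P j)))
      ≤ (ell G : ℤ) + ell (G - ∑ j, pt (P j))
        - ell (pastDiv pt P G i) - ell (futureDiv pt P G i) := by
  -- abbreviations
  have key : ∀ A : Div, (deg A : ℤ) < gon (⇑deg) ell j → ell A < j := by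
    intro A hA
    by_contra h
    push_neg at h
    have hbdd : BddBelow {m : ℤ | ∃ B : Div, deg B = m ∧ j ≤ ell B} := by
      refine ⟨0, ?_⟩
      rintro m ⟨B, rfl, hB⟩
      by_contra hm
      push_neg at hm
      have := hell_neg B hm
      omega
    have : gon (⇑deg) ell j ≤ deg A := csInf_le hbdd ⟨A, rfl, h⟩
    omega
  have hdegsum : ∀ s : Finset (Fin n), deg (∑ m ∈ s, pt (P m)) = s.card := by
    intro s
    rw [map_sum]
    simp [hdeg_pt]
  have hc1 : (Finset.univ.filter (fun m : Fin n => (m : ℕ) < i)).card = i := by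
    have h1 : Finset.filter (fun m : Fin n => (m:ℕ) < i) Finset.univ
        = (Finset.range i).attachFin (fun m hm => lt_of_lt_of_le (Finset.mem_range.mp hm) hi) := by
      ext x
      simp [Finset.mem_attachFin]
    rw [h1, Finset.card_attachFin, Finset.card_range]
  have hc2 : (Finset.univ.filter (fun m : Fin n => i ≤ (m : ℕ))).card = n - i := by
    have := Finset.card_filter_add_card_filter_not
      (s := (Finset.univ : Finset (Fin n))) (p := fun m : Fin n => (m:ℕ) < i)
    simp only [not_lt, Finset.card_univ, Fintype.card_fin] at this
    omega
  -- ell of past and future divisors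
  have hdegA : deg (pastDiv pt P G i) = deg G - i := by
    simp [pastDiv, map_sub, hdegsum, hc1]
  have hdegB : deg (futureDiv pt P G i) = deg G - ((n : ℤ) - i) := by
    simp only [futureDiv, map_sub, hdegsum, hc2]
    push_cast [Nat.cast_sub hi]
    ring
  have hA : ell (pastDiv pt P G i) < j := by
    apply key
    rw [hdegA]
    have := lt_of_lt_of_le hgon (min_le_left _ _)
    omega
  have hB : ell (futureDiv pt P G i) < j := by
    apply key
    rw [hdegB]
    have := lt_of_lt_of_le hgon (min_le_right _ _)
    omega
  have h0 : (0 : ℤ) ≤ ell (G - ∑ m, pt (P m)) := Int.ofNat_nonneg _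
  have hAj : (ell (pastDiv pt P G i) : ℤ) ≤ (j : ℤ) - 1 := by
    have h' : (ell (pastDiv pt P G i) : ℤ) < (j : ℤ) := by exact_mod_cast hA
    omega
  have hBj : (ell (futureDiv pt P G i) : ℤ) ≤ (j : ℤ) - 1 := by
    have h' : (ell (futureDiv pt P G i) : ℤ) < (j : ℤ) := by exact_mod_cast hB
    omega
  linarith
end

section
/- Let C = C_X(D,G) be a selfdual AG code of even length n on an elliptic curve X (g = 1, 2G = D + K with K a canonical divisor, so deg G = n/2). Then the state dimensions satisfy: s_i = i for 0 ≤ i < n/2, s_i = n - i for n/2 < i ≤ n, and s_{n/2} = n/2 - 2ℓ(A_{n/2}), where A_i = G - P_1 - ... - P_i; moreover ℓ(A_{n/2}) ∈ {0,1}, and ℓ(A_{n/2}) = 1 if and only if G is linearly equivalent to P_1 + ... + P_{n/2}. -/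
/-- for a selfdual AG code of even length `n = 2m` on an elliptic
curve (`g = 1`, `2G = D + K`), the state dimensions `s_i = ℓ(G) + a - ℓ(A_i) - ℓ(B_i)`
satisfy `s_i = i` for `i < m`, `s_i = n - i` for `m < i ≤ n`, and
`s_m = m - 2ℓ(A_m)`; moreover `ℓ(A_m) ∈ {0,1}` and `ℓ(A_m) = 1` iff `G` is
linearly equivalent to `P_1 + ... + P_m`. -/
theorem stmt16
    {Div : Type*} [AddCommGroup Div]
    (deg : Div →+ ℤ) (ell : Div → ℕ) (g : ℕ) (K : Div)
    (Pt : Type*) [Nonempty Pt] (pt : Pt → Div)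
    (hdeg_pt : ∀ P, deg (pt P) = 1)
    (hell_neg : ∀ A, deg A < 0 → ell A = 0)
    (hell_zero : ell (0 : Div) = 1)
    (hell_deg_zero : ∀ A, deg A = 0 → ell A ≤ 1)
    (hell_sub : ∀ A P, ell A ≤ ell (A - pt P) + 1)
    (hell_mono : ∀ A P, ell A ≤ ell (A + pt P))
    (hK : deg K = 2 * (g : ℤ) - 2)
    (hRR : ∀ A, (ell A : ℤ) - (ell (K - A) : ℤ) = deg A + 1 - (g : ℤ))
    (hCliff : ∀ A, 0 < ell A → 0 < ell (K - A) → 2 * ((ell A : ℤ) - 1) ≤ deg A)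
    (hell_add : ∀ A B, 0 < ell A → 0 < ell B → ell A + ell B ≤ ell (A + B) + 1)
    (linEquiv : Div → Div → Prop)
    (hlin_zero : ∀ A, deg A = 0 → (ell A = 1 ↔ linEquiv A 0))
    (hlin_sub : ∀ A B, linEquiv A B ↔ linEquiv (A - B) 0)
    (n m : ℕ) (hn : n = 2 * m) (hm : 0 < m)
    (P : Fin n → Pt) (hP : Function.Injective P) (G : Div)
    (hg : g = 1)
    (hself : G + G = (∑ j, pt (P j)) + K)
    :
    (∀ i : ℕ, i < m →
      (ell G : ℤ) + ell (G - ∑ j, pt (P j))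
          - ell (pastDiv pt P G i) - ell (futureDiv pt P G i) = (i : ℤ)) ∧
    (∀ i : ℕ, m < i → i ≤ n →
      (ell G : ℤ) + ell (G - ∑ j, pt (P j))
          - ell (pastDiv pt P G i) - ell (futureDiv pt P G i) = (n : ℤ) - i) ∧
    ((ell G : ℤ) + ell (G - ∑ j, pt (P j))
          - ell (pastDiv pt P G m) - ell (futureDiv pt P G m)
        = (m : ℤ) - 2 * ell (pastDiv pt P G m)) ∧
    ell (pastDiv pt P G m) ≤ 1 ∧
    (ell (pastDiv pt P G m) = 1 ↔
      linEquiv G (∑ j ∈ Finset.univ.filter (fun j : Fin n => (j : ℕ) < m), pt (P j))) := by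

  subst hg hn
  have hK0 : deg K = 0 := by rw [hK]; norm_num
  have hcard : ∀ i : ℕ, i ≤ 2*m →
      (Finset.univ.filter (fun j : Fin (2*m) => (j:ℕ) < i)).card = i := by
    intro i h
    have he : (Finset.univ.filter (fun j : Fin (2*m) => (j:ℕ) < i)) =
        Finset.attachFin (Finset.range i)
          (fun k hk => lt_of_lt_of_le (Finset.mem_range.mp hk) h) := by
      ext j; simp
    rw [he, Finset.card_attachFin, Finset.card_range]
  have hcard' : ∀ i : ℕ, i ≤ 2*m →
      (Finset.univ.filter (fun j : Fin (2*m) => i ≤ (j:ℕ))).card = 2*m - i := by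
    intro i h
    have hfe : (Finset.univ.filter (fun j : Fin (2*m) => i ≤ (j:ℕ))) =
        (Finset.univ.filter (fun j : Fin (2*m) => ¬ (j:ℕ) < i)) := by
      apply Finset.filter_congr; intro j _; simp [not_lt]
    have hpart := Finset.card_filter_add_card_filter_not
      (s := (Finset.univ : Finset (Fin (2*m)))) (p := fun j : Fin (2*m) => (j:ℕ) < i)
    rw [hcard i h] at hpart
    simp only [Finset.card_univ, Fintype.card_fin] at hpart
    rw [hfe]
    omega
  have hdegsum : ∀ s : Finset (Fin (2*m)), deg (∑ j ∈ s, pt (P j)) = (s.card : ℤ) := by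
    intro s; rw [map_sum]; simp [hdeg_pt]
  have hdegD : deg (∑ j, pt (P j)) = (2*m : ℤ) := by
    rw [hdegsum]; simp
  have hdegG : deg G = (m : ℤ) := by
    have h := congrArg deg hself
    rw [map_add, map_add, hdegD, hK0] at h
    linarith
  have hellpos : ∀ A : Div, 0 < deg A → (ell A : ℤ) = deg A := by
    intro A h
    have h1 : deg (K - A) < 0 := by rw [map_sub, hK0]; linarith
    have h2 := hRR A
    rw [hell_neg _ h1] at h2
    push_cast at h2
    linarith
  have hdegA : ∀ i : ℕ, i ≤ 2*m → deg (pastDiv pt P G i) = (m : ℤ) - i := by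
    intro i h
    rw [pastDiv, map_sub, hdegsum, hcard i h, hdegG]
  have hdegB : ∀ i : ℕ, i ≤ 2*m → deg (futureDiv pt P G i) = (i : ℤ) - m := by
    intro i h
    rw [futureDiv, map_sub, hdegsum, hcard' i h, hdegG]
    push_cast [Nat.cast_sub h]
    ring
  have hmZ : (0 : ℤ) < m := by exact_mod_cast hm
  have hellGD : ell (G - ∑ j, pt (P j)) = 0 := by
    apply hell_neg
    rw [map_sub, hdegG, hdegD]
    linarith
  have hG : (ell G : ℤ) = m := by
    rw [hellpos G (by rw [hdegG]; exact hmZ), hdegG]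
  have hsplit : (∑ j ∈ Finset.univ.filter (fun j : Fin (2*m) => (j:ℕ) < m), pt (P j))
      + (∑ j ∈ Finset.univ.filter (fun j : Fin (2*m) => m ≤ (j:ℕ)), pt (P j))
      = ∑ j, pt (P j) := by
    rw [← Finset.sum_filter_add_sum_filter_not Finset.univ (fun j : Fin (2*m) => (j:ℕ) < m)]
    congr 1
    apply Finset.sum_congr _ (fun _ _ => rfl)
    apply Finset.filter_congr; intro j _; simp [not_lt]
  have hAB : futureDiv pt P G m = K - pastDiv pt P G m := by
    have h2 : G + G = (∑ j ∈ Finset.univ.filter (fun j : Fin (2*m) => (j:ℕ) < m), pt (P j))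
        + (∑ j ∈ Finset.univ.filter (fun j : Fin (2*m) => m ≤ (j:ℕ)), pt (P j)) + K := by
      rw [hsplit]; exact hself
    rw [pastDiv, futureDiv, eq_sub_iff_add_eq]
    have h3 : G + G - ((∑ j ∈ Finset.univ.filter (fun j : Fin (2*m) => (j:ℕ) < m), pt (P j))
        + (∑ j ∈ Finset.univ.filter (fun j : Fin (2*m) => m ≤ (j:ℕ)), pt (P j))) = K := by
      rw [h2]; abel
    rw [← h3]; abel
  have hdegAm : deg (pastDiv pt P G m) = 0 := by
    rw [hdegA m (by omega)]; ring
  have hBm : (ell (futureDiv pt P G m) : ℤ) = ell (pastDiv pt P G m) := by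
    rw [hAB]
    have h2 := hRR (pastDiv pt P G m)
    rw [hdegAm] at h2
    push_cast at h2 ⊢
    linarith
  refine ⟨?_, ?_, ?_, hell_deg_zero _ hdegAm, ?_⟩
  · intro i hi
    have hi2 : i ≤ 2*m := by omega
    have hA : (ell (pastDiv pt P G i) : ℤ) = (m : ℤ) - i := by
      rw [hellpos _ (by rw [hdegA i hi2]; exact_mod_cast (by omega : (0:ℤ) < (m:ℤ) - i)),
        hdegA i hi2]
    have hB : ell (futureDiv pt P G i) = 0 := by
      apply hell_neg
      rw [hdegB i hi2]
      exact_mod_cast (by omega : ((i:ℤ) - m) < 0)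
    rw [hellGD, hB]
    push_cast
    linarith
  · intro i hi1 hi2
    have hA : ell (pastDiv pt P G i) = 0 := by
      apply hell_neg
      rw [hdegA i hi2]
      exact_mod_cast (by omega : ((m:ℤ) - i) < 0)
    have hB : (ell (futureDiv pt P G i) : ℤ) = (i : ℤ) - m := by
      rw [hellpos _ (by rw [hdegB i hi2]; exact_mod_cast (by omega : (0:ℤ) < (i:ℤ) - m)),
        hdegB i hi2]
    rw [hellGD, hA]
    push_cast
    linarith
  · rw [hellGD]
    push_cast
    linarith [hBm, hG]
  · have h1 := hlin_zero (pastDiv pt P G m) hdegAm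
    have h2 := hlin_sub G
      (∑ j ∈ Finset.univ.filter (fun j : Fin (2*m) => (j:ℕ) < m), pt (P j))
    rw [h1, pastDiv]
    exact h2.symm
end

section
/- Let C = C_X(D,G) be an AG code of length n, abundance a, on a curve of genus g with gonality sequence (γ_i). If deg(G) < ⌊n/2⌋ + γ_{a+1}, then the minimum distance d of C satisfies 2d ≥ n + 2. -/
/-- for an AG code `C_X(D,G)` of length `n` and abundance `a`, if
`deg G < ⌊n/2⌋ + γ_{a+1}` then the minimum distance `d` (witnessed as
`d = n - deg D'` with `0 ≤ D' ≤ D`, `ℓ(G - D') ≥ a + 1`) satisfies `2d ≥ n + 2`. -/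
theorem stmt18
    {Div : Type*} [AddCommGroup Div]
    (deg : Div →+ ℤ) (ell : Div → ℕ) (g : ℕ) (K : Div)
    (Pt : Type*) [Nonempty Pt] (pt : Pt → Div)
    (hdeg_pt : ∀ P, deg (pt P) = 1)
    (hell_neg : ∀ A, deg A < 0 → ell A = 0)
    (hell_zero : ell (0 : Div) = 1)
    (hell_deg_zero : ∀ A, deg A = 0 → ell A ≤ 1)
    (hell_sub : ∀ A P, ell A ≤ ell (A - pt P) + 1)
    (hell_mono : ∀ A P, ell A ≤ ell (A + pt P))
    (hK : deg K = 2 * (g : ℤ) - 2)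
    (hRR : ∀ A, (ell A : ℤ) - (ell (K - A) : ℤ) = deg A + 1 - (g : ℤ))
    (hCliff : ∀ A, 0 < ell A → 0 < ell (K - A) → 2 * ((ell A : ℤ) - 1) ≤ deg A)
    (hell_add : ∀ A B, 0 < ell A → 0 < ell B → ell A + ell B ≤ ell (A + B) + 1)
    (n : ℕ) (P : Fin n → Pt) (hP : Function.Injective P) (G : Div)
    (d : ℕ)
    (hd : ∃ S : Finset (Fin n), (d : ℤ) = (n : ℤ) - S.card ∧
      ell (G - ∑ j, pt (P j)) + 1 ≤ ell (G - ∑ j ∈ S, pt (P j)))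
    (hdeg : deg G < (n : ℤ) / 2 + gon (⇑deg) ell (ell (G - ∑ j, pt (P j)) + 1))
    :
    (n : ℤ) + 2 ≤ 2 * (d : ℤ) := by
  obtain ⟨S, hdS, hS⟩ := hd
  set a := ell (G - ∑ j, pt (P j)) with ha
  have hbdd : BddBelow {m : ℤ | ∃ A, deg A = m ∧ a + 1 ≤ ell A} := by
    refine ⟨0, ?_⟩
    rintro m ⟨A, rfl, hA⟩
    by_contra h
    push_neg at h
    have := hell_neg A h
    omega
  have hdegDS : deg (∑ j ∈ S, pt (P j)) = (S.card : ℤ) := by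
    rw [map_sum]
    simp [hdeg_pt]
  have hgon : gon (⇑deg) ell (a + 1) ≤ deg G - S.card := by
    apply csInf_le hbdd
    exact ⟨G - ∑ j ∈ S, pt (P j), by simp [map_sub, hdegDS], hS⟩
  omega
end

section
/- Let C = C_X(D,G) be an AG code of abundance a on a curve of genus g with gonality sequence (γ_i), with a ≤ g/2. Set i_0 = g + 1 - 2a. Then either γ_{a+i_0} ≥ 2·deg(G) - n - γ_{a+1} + 2 or γ_{a+i_0} ≥ n + 2(2g-2) - 2·deg(G) - γ_{a+1} + 2. -/
lemma gon_lower_bound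
    {Div : Type*} [AddCommGroup Div]
    (deg : Div →+ ℤ) (ell : Div → ℕ) (g : ℕ) (K : Div)
    (Pt : Type*) [Nonempty Pt] (pt : Pt → Div)
    (hdeg_pt : ∀ P, deg (pt P) = 1)
    (hell_neg : ∀ A, deg A < 0 → ell A = 0)
    (hK : deg K = 2 * (g : ℤ) - 2)
    (hRR : ∀ A, (ell A : ℤ) - (ell (K - A) : ℤ) = deg A + 1 - (g : ℤ))
    (hCliff : ∀ A, 0 < ell A → 0 < ell (K - A) → 2 * ((ell A : ℤ) - 1) ≤ deg A)
    (j : ℕ) (hj1 : 1 ≤ j) (hj2 : j ≤ g + 1) :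
    2 * (j : ℤ) - 2 ≤ gon (⇑deg) ell j := by
  have P := Classical.arbitrary Pt
  set A₀ : Div := (2 * g + j) • pt P with hA₀
  have hdegA₀ : deg A₀ = ((2 * g + j : ℕ) : ℤ) := by
    rw [hA₀, map_nsmul, hdeg_pt]; simp
  have hKA₀ : ell (K - A₀) = 0 := by
    apply hell_neg
    rw [map_sub, hK, hdegA₀]
    push_cast
    omega
  have hellA₀ : (j : ℕ) ≤ ell A₀ := by
    have := hRR A₀
    rw [hKA₀, hdegA₀] at this
    push_cast at this
    omega
  refine le_csInf ⟨deg A₀, A₀, rfl, hellA₀⟩ ?_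
  rintro m ⟨A, rfl, hA⟩
  have hellA : 0 < ell A := lt_of_lt_of_le hj1 hA
  have hdegA : 0 ≤ deg A := by
    by_contra h
    have := hell_neg A (by omega)
    omega
  rcases Nat.eq_zero_or_pos (ell (K - A)) with h0 | h0
  · have := hRR A
    rw [h0] at this
    have : (ell A : ℤ) ≥ j := by exact_mod_cast hA
    omega
  · have := hCliff A hellA h0
    have : (ell A : ℤ) ≥ j := by exact_mod_cast hA
    omega

/-- for an AG code `C_X(D,G)` of abundance `a = ℓ(G-D)` on a curve
of genus `g` with `a ≤ g/2`, setting `i₀ = g + 1 - 2a`, either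
`γ_{a+i₀} ≥ 2 deg G - n - γ_{a+1} + 2` or
`γ_{a+i₀} ≥ n + 2(2g-2) - 2 deg G - γ_{a+1} + 2`, where `n = deg D`. -/
theorem stmt19
    {Div : Type*} [AddCommGroup Div]
    (deg : Div →+ ℤ) (ell : Div → ℕ) (g : ℕ) (K : Div)
    (Pt : Type*) [Nonempty Pt] (pt : Pt → Div)
    (hdeg_pt : ∀ P, deg (pt P) = 1)
    (hell_neg : ∀ A, deg A < 0 → ell A = 0)
    (hell_zero : ell (0 : Div) = 1)
    (hell_deg_zero : ∀ A, deg A = 0 → ell A ≤ 1)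
    (hell_sub : ∀ A P, ell A ≤ ell (A - pt P) + 1)
    (hell_mono : ∀ A P, ell A ≤ ell (A + pt P))
    (hK : deg K = 2 * (g : ℤ) - 2)
    (hRR : ∀ A, (ell A : ℤ) - (ell (K - A) : ℤ) = deg A + 1 - (g : ℤ))
    (hCliff : ∀ A, 0 < ell A → 0 < ell (K - A) → 2 * ((ell A : ℤ) - 1) ≤ deg A)
    (hell_add : ∀ A B, 0 < ell A → 0 < ell B → ell A + ell B ≤ ell (A + B) + 1)
    (G D : Div)
    (ha : 2 * ell (G - D) ≤ g)
    :
    2 * deg G - deg D - gon (⇑deg) ell (ell (G - D) + 1) + 2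
        ≤ gon (⇑deg) ell (ell (G - D) + (g + 1 - 2 * ell (G - D))) ∨
    deg D + 2 * (2 * (g : ℤ) - 2) - 2 * deg G - gon (⇑deg) ell (ell (G - D) + 1) + 2
        ≤ gon (⇑deg) ell (ell (G - D) + (g + 1 - 2 * ell (G - D))) := by
  set a := ell (G - D) with haa
  have h1 : 2 * ((a : ℕ) + 1 : ℕ) - 2 ≤ gon (⇑deg) ell (a + 1) := by
    have := gon_lower_bound deg ell g K Pt pt hdeg_pt hell_neg hK hRR hCliff
      (a + 1) (by omega) (by omega)
    exact_mod_cast this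
  have h2 : 2 * ((a + (g + 1 - 2 * a) : ℕ) : ℤ) - 2
      ≤ gon (⇑deg) ell (a + (g + 1 - 2 * a)) :=
    gon_lower_bound deg ell g K Pt pt hdeg_pt hell_neg hK hRR hCliff
      (a + (g + 1 - 2 * a)) (by omega) (by omega)
  have hc1 : ((a + 1 : ℕ) : ℤ) = (a : ℤ) + 1 := by push_cast; ring
  have hc2 : ((a + (g + 1 - 2 * a) : ℕ) : ℤ) = (g : ℤ) + 1 - a := by omega
  rw [hc2] at h2
  by_contra hcon
  push_neg at hcon
  obtain ⟨hx, hy⟩ := hcon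
  have h1' : 2 * ((a : ℤ) + 1) - 2 ≤ gon (⇑deg) ell (a + 1) := by
    exact_mod_cast h1
  linarith
end
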